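/- Under the stated assumptions on A_per and A_0, the corrector problem -div[A_per(p + ∇w_p)] = 0 with w_p Z^d-periodic is equivalent to the Lippmann–Schwinger equation: τ_p ∈ V_0 satisfies (A_per - A_0)^{-1}τ_p + Γ_0 * τ_p = p a.e. on Q_0 and τ_p = 0 on Q \ Q_0, via the correspondence τ_p = (A_per - A_0)(p + ∇w_p). -/

import Mathlib

open MeasureTheory Complex
open scoped BigOperators ComplexConjugate Real Classical

noncomputable section

instance : Fact ((0:ℝ) < 1) := ⟨one_pos⟩

/-- The `d`-dimensional unit torus `ℝ^d / ℤ^d`. -/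
abbrev Torus (d : ℕ) := Fin d → AddCircle (1 : ℝ)

variable {d : ℕ}

/-- The Fourier character `x ↦ exp(2iπ kᵀx)` on the torus. -/
noncomputable def tChar (k : Fin d → ℤ) (x : Torus d) : ℂ := ∏ i, fourier (k i) (x i)

/-- Fourier coefficient of a periodic vector field. -/
noncomputable def vCoeff (τ : Torus d → Fin d → ℝ) (k : Fin d → ℤ) : Fin d → ℂ :=
  fun j => ∫ x : Torus d, (τ x j : ℂ) * conj (tChar k x)

/-- Fourier multiplier `Γ̂₀(k)` of the second-rank Green operator of `A0`. -/
noncomputable def greenHat (A0 : Matrix (Fin d) (Fin d) ℝ) (k : Fin d → ℤ) :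
    Matrix (Fin d) (Fin d) ℝ :=
  if k = 0 then 0 else
    (∑ i, ∑ j, (k i : ℝ) * A0 i j * (k j : ℝ))⁻¹ •
      Matrix.of (fun i j => (k i : ℝ) * (k j : ℝ))

/-- `g = Γ₀ ∗ τ`, expressed through Fourier coefficients. -/
def IsGreenConv (A0 : Matrix (Fin d) (Fin d) ℝ) (τ g : Torus d → Fin d → ℝ) : Prop :=
  ∀ k j, vCoeff g k j = ∑ l, (greenHat A0 k j l : ℂ) * vCoeff τ k l

/-- `g` is the gradient of a `ℤ^d`-periodic (`H¹`) function. -/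
def IsGradientField (g : Torus d → Fin d → ℝ) : Prop :=
  ∀ k, ∃ c : ℂ, ∀ j, vCoeff g k j = c * (k j : ℂ)

/-- Weak form of `-div F = 0` for a periodic vector field `F`. -/
def IsWeakDivFree (F : Torus d → Fin d → ℝ) : Prop :=
  ∀ k, ∑ j, (k j : ℂ) * vCoeff F k j = 0

/-- `τ` vanishes a.e. outside `Q0`. -/
def ZeroOff (Q0 : Set (Torus d)) (τ : Torus d → Fin d → ℝ) : Prop :=
  ∀ᵐ x : Torus d, x ∉ Q0 → τ x = 0

/-- The Lippmann–Schwinger bilinear form `a(τ,ϖ)`, where `G = Γ₀ ∗ τ` is given. -/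
noncomputable def aForm (Aper : Torus d → Matrix (Fin d) (Fin d) ℝ)
    (A0 : Matrix (Fin d) (Fin d) ℝ) (Q0 : Set (Torus d))
    (τ G ϖ : Torus d → Fin d → ℝ) : ℝ :=
  (∫ x in Q0, ∑ i, ϖ x i * ((Aper x - A0)⁻¹.mulVec (τ x)) i) +
    ∫ x in Q0, ∑ i, ϖ x i * G x i

/-- `L²(S)` norm of a vector field. -/
noncomputable def l2normOn (S : Set (Torus d)) (τ : Torus d → Fin d → ℝ) : ℝ :=
  Real.sqrt (∫ x in S, ∑ i, (τ x i) ^ 2)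


/-!
In Fourier variables `Γ̂₀(k) = (kᵀA₀k)⁻¹ k kᵀ` for every `k`, including `k = 0` (where `0⁻¹ = 0`).
Split the flux as `A_per(p + ∇w) = A₀(p + ∇w) + τ` with `τ = (A_per - A₀)(p + ∇w)`.
If `∇w` has Fourier coefficients `c_k k`, the `k`-th mode of its divergence is
`c_k kᵀA₀k + k·τ̂(k)` for `k ≠ 0`, so the flux is divergence free exactly when
`c_k k = -Γ̂₀(k) τ̂(k)`, i.e. `∇w = -Γ₀ ∗ τ`. The contrast condition makes `A_per - A₀`
invertible on `Q₀`, which lets one pass between `τ` and `p + ∇w` pointwise.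
-/

open Matrix

section MatrixLemmas

variable {n : Type*} [Fintype n] [DecidableEq n]

theorem isUnit_det_of_le_abs_quadForm {M : Matrix n n ℝ} {c : ℝ} (hc : 0 < c)
    (h : ∀ ξ : n → ℝ, c * ∑ i, ξ i ^ 2 ≤ |∑ i, ∑ j, ξ i * M i j * ξ j|) : IsUnit M.det := by
  rw [isUnit_iff_ne_zero]
  intro hdet
  obtain ⟨v, hv, hMv⟩ := exists_mulVec_eq_zero_iff.mpr hdet
  have hquad : ∑ i, ∑ j, v i * M i j * v j = 0 := by
    have : ∑ i, ∑ j, v i * M i j * v j = v ⬝ᵥ M *ᵥ v := by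
      simp only [dotProduct, mulVec, Finset.mul_sum, mul_assoc]
    rw [this, hMv, dotProduct_zero]
  have hsq : ∑ i, v i ^ 2 = 0 := by
    have := h v
    rw [hquad, abs_zero] at this
    exact le_antisymm (nonpos_of_mul_nonpos_right this hc) (by positivity)
  refine hv (funext fun i => ?_)
  have := (Finset.sum_eq_zero_iff_of_nonneg fun i _ => sq_nonneg (v i)).mp hsq i
    (Finset.mem_univ i)
  exact pow_eq_zero_iff two_ne_zero |>.mp this

theorem mulVec_sub_eq_mulVec_add_of_inv_mulVec_add_eq {α : Type*} [CommRing α]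
    {A B : Matrix n n α} (hAB : IsUnit (A - B).det) {t v p : n → α}
    (h : (A - B)⁻¹ *ᵥ t + v = p) : A *ᵥ (p - v) = B *ᵥ (p - v) + t := by
  have hpv : p - v = (A - B)⁻¹ *ᵥ t := by rw [← h, add_sub_cancel_right]
  have hcancel : (A - B) *ᵥ (p - v) = t := by
    rw [hpv, mulVec_mulVec, mul_nonsing_inv _ hAB, one_mulVec]
  rw [← hcancel, ← add_mulVec, add_sub_cancel]

end MatrixLemmas

section GreenOperator

/-- The symbol of `-div (A ∇ ·)` at the frequency `k`, up to the factor `4π²`. -/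
def divGradSymbol (A : Matrix (Fin d) (Fin d) ℝ) (k : Fin d → ℤ) : ℝ :=
  ∑ i, ∑ j, (k i : ℝ) * A i j * (k j : ℝ)

theorem divGradSymbol_pos {A : Matrix (Fin d) (Fin d) ℝ}
    (hA : ∀ ξ : Fin d → ℝ, ξ ≠ 0 → 0 < ∑ i, ∑ j, ξ i * A i j * ξ j)
    {k : Fin d → ℤ} (hk : k ≠ 0) : 0 < divGradSymbol A k :=
  hA _ fun h => hk (funext fun i => by simpa using congrFun h i)

theorem greenHat_apply (A : Matrix (Fin d) (Fin d) ℝ) (k : Fin d → ℤ) (i j : Fin d) :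
    greenHat A k i j = (divGradSymbol A k)⁻¹ * k i * k j := by
  unfold greenHat
  split_ifs with hk
  · simp [hk]
  · simp [divGradSymbol, mul_assoc]

theorem isGreenConv_iff {A : Matrix (Fin d) (Fin d) ℝ} {τ G : Torus d → Fin d → ℝ} :
    IsGreenConv A τ G ↔ ∀ k j, vCoeff G k j =
      ((divGradSymbol A k : ℝ) : ℂ)⁻¹ * k j * ∑ l, (k l : ℂ) * vCoeff τ k l := by
  refine forall₂_congr fun k j => ?_
  rw [Finset.mul_sum]
  refine Eq.congr_right (Finset.sum_congr rfl fun l _ => ?_)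
  rw [greenHat_apply]
  push_cast
  ring

theorem sum_mul_sum_mul_eq_mul_divGradSymbol (A : Matrix (Fin d) (Fin d) ℝ) (k : Fin d → ℤ)
    (c : ℂ) :
    ∑ j, (k j : ℂ) * ∑ m, (A j m : ℂ) * (c * k m) = c * divGradSymbol A k := by
  simp only [divGradSymbol, Finset.mul_sum]
  push_cast
  simp only [Finset.mul_sum]
  exact Finset.sum_congr rfl fun _ _ => Finset.sum_congr rfl fun _ _ => by ring

end GreenOperator

section Integrability

theorem integrable_mulVec_of_ae_bound {X : Type*} [MeasurableSpace X] {μ : Measure X}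
    {A : X → Matrix (Fin d) (Fin d) ℝ} (hA : ∀ i j, Measurable fun x => A x i j) {M : ℝ}
    (hM : ∀ᵐ x ∂μ, ∀ i j, |A x i j| ≤ M) {v : X → Fin d → ℝ} (hv : Integrable v μ) :
    Integrable (fun x => A x *ᵥ v x) μ := by
  refine Integrable.of_eval fun i => ?_
  simp only [mulVec, dotProduct]
  refine integrable_finsetSum _ fun j _ => ?_
  refine (hv.eval j).bdd_mul (hA i j).aestronglyMeasurable (c := M) ?_
  filter_upwards [hM] with x hx
  exact hx i j

theorem MeasureTheory.Integrable.const_mulVec {X : Type*} [MeasurableSpace X] {μ : Measure X}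
    (A : Matrix (Fin d) (Fin d) ℝ) {v : X → Fin d → ℝ} (hv : Integrable v μ) :
    Integrable (fun x => A *ᵥ v x) μ :=
  (LinearMap.toContinuousLinearMap (mulVecLin A)).integrable_comp hv

end Integrability

section FourierCoefficients

theorem integral_conj_tChar_eq_zero {k : Fin d → ℤ} (hk : k ≠ 0) :
    ∫ x : Torus d, conj (tChar k x) = 0 := by
  have hconj : ∀ x : Torus d, conj (tChar k x) = ∏ i, fourier (-k i) (x i) := fun x => by
    rw [tChar, map_prod]
    exact Finset.prod_congr rfl fun i _ => fourier_neg.symm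
  simp_rw [hconj]
  rw [integral_fintype_prod_volume_eq_prod
    (fun i (y : AddCircle (1 : ℝ)) => (fourier (-k i) y : ℂ))]
  obtain ⟨i, hi⟩ : ∃ i, k i ≠ 0 := by
    by_contra! h
    exact hk (funext h)
  exact Finset.prod_eq_zero (Finset.mem_univ i) <| integral_eq_zero_of_add_right_eq_neg
    (fourier_add_half_inv_index (neg_ne_zero.mpr hi) one_pos)

theorem integrable_ofReal_mul_conj_tChar {h : Torus d → ℝ} (hh : Integrable h) (k : Fin d → ℤ) :
    Integrable fun x => (h x : ℂ) * conj (tChar k x) := by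
  have hχ : Continuous fun x => conj (tChar k x) :=
    continuous_conj.comp <| continuous_finsetProd _ fun i _ =>
      (map_continuous (fourier (k i))).comp (continuous_apply i)
  refine hh.ofReal.mul_bdd hχ.aestronglyMeasurable (c := 1) (ae_of_all _ fun x => ?_)
  simp [tChar, norm_prod, Circle.norm_coe]

variable {f g : Torus d → Fin d → ℝ}

theorem vCoeff_add (hf : Integrable f) (hg : Integrable g) (k : Fin d → ℤ) :
    vCoeff (fun x => f x + g x) k = vCoeff f k + vCoeff g k := by
  funext j
  simp only [vCoeff, Pi.add_apply, ofReal_add, add_mul]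
  exact integral_add (integrable_ofReal_mul_conj_tChar (hf.eval j) k)
    (integrable_ofReal_mul_conj_tChar (hg.eval j) k)

theorem vCoeff_neg (f : Torus d → Fin d → ℝ) (k : Fin d → ℤ) :
    vCoeff (fun x => -f x) k = -vCoeff f k := by
  funext j
  simp only [vCoeff, Pi.neg_apply, ofReal_neg, neg_mul, integral_neg]

theorem vCoeff_const (q : Fin d → ℝ) {k : Fin d → ℤ} (hk : k ≠ 0) :
    vCoeff (fun _ => q) k = 0 := by
  funext j
  simp only [vCoeff, integral_const_mul, integral_conj_tChar_eq_zero hk, mul_zero, Pi.zero_apply]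

theorem vCoeff_mulVec (A : Matrix (Fin d) (Fin d) ℝ) (hf : Integrable f) (k : Fin d → ℤ)
    (j : Fin d) : vCoeff (fun x => A *ᵥ f x) k j = ∑ m, (A j m : ℂ) * vCoeff f k m := by
  simp only [vCoeff, mulVec, dotProduct, ofReal_sum, ofReal_mul, Finset.sum_mul, mul_assoc]
  rw [integral_finsetSum _ fun m _ => (integrable_ofReal_mul_conj_tChar (hf.eval m) k).const_mul _]
  simp only [integral_const_mul]

theorem vCoeff_congr_ae (h : f =ᵐ[volume] g) : vCoeff f = vCoeff g := by
  funext k j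
  exact integral_congr_ae (h.mono fun x hx => by simp only [hx])

theorem sum_mul_vCoeff_of_ae_eq {F f τ : Torus d → Fin d → ℝ} {A : Matrix (Fin d) (Fin d) ℝ}
    {q : Fin d → ℝ} (hf : Integrable f) (hτ : Integrable τ)
    (hF : ∀ᵐ x, F x = A *ᵥ (q + f x) + τ x) {k : Fin d → ℤ} (hk : k ≠ 0) {c : ℂ}
    (hc : ∀ j, vCoeff f k j = c * k j) :
    ∑ j, (k j : ℂ) * vCoeff F k j = c * divGradSymbol A k + ∑ j, (k j : ℂ) * vCoeff τ k j := by
  have hqf : Integrable fun x => q + f x := (integrable_const q).add hf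
  have hFhat : ∀ j, vCoeff F k j = ∑ m, (A j m : ℂ) * (c * k m) + vCoeff τ k j := by
    intro j
    rw [vCoeff_congr_ae hF, vCoeff_add (hqf.const_mulVec A) hτ, Pi.add_apply, vCoeff_mulVec A hqf,
      vCoeff_add (integrable_const q) hf, vCoeff_const q hk, zero_add]
    simp only [hc]
  simp only [hFhat, mul_add, Finset.sum_add_distrib, sum_mul_sum_mul_eq_mul_divGradSymbol]

end FourierCoefficients

section Equivalence

variable {Aper : Torus d → Matrix (Fin d) (Fin d) ℝ} {A0 : Matrix (Fin d) (Fin d) ℝ}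
  {Q0 : Set (Torus d)}

theorem lippmannSchwinger_of_corrector (hmeas : ∀ i j, Measurable fun x => Aper x i j)
    {M : ℝ} (hM : ∀ᵐ x : Torus d, ∀ i j, |Aper x i j| ≤ M)
    (hA0pos : ∀ ξ : Fin d → ℝ, ξ ≠ 0 → 0 < ∑ i, ∑ j, ξ i * A0 i j * ξ j)
    (heq : ∀ᵐ x : Torus d, x ∉ Q0 → Aper x = A0)
    (hunit : ∀ᵐ x : Torus d, x ∈ Q0 → IsUnit (Aper x - A0).det) (p : Fin d → ℝ)
    {g : Torus d → Fin d → ℝ} (hg : Integrable g) (hgrad : IsGradientField g)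
    (hdiv : IsWeakDivFree fun x => Aper x *ᵥ fun j => p j + g x j) :
    ZeroOff Q0 (fun x => (Aper x - A0) *ᵥ fun j => p j + g x j) ∧
      ∃ G : Torus d → Fin d → ℝ,
        IsGreenConv A0 (fun x => (Aper x - A0) *ᵥ fun j => p j + g x j) G ∧
          ∀ᵐ x : Torus d, x ∈ Q0 →
            (Aper x - A0)⁻¹ *ᵥ ((Aper x - A0) *ᵥ fun j => p j + g x j) + G x = p := by
  have hpg : Integrable fun x => p + g x := (integrable_const p).add hg
  set τ := fun x => (Aper x - A0) *ᵥ fun j => p j + g x j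
  have hF : ∀ x, Aper x *ᵥ (fun j => p j + g x j) = A0 *ᵥ (p + g x) + τ x := fun x => by
    change Aper x *ᵥ (p + g x) = A0 *ᵥ (p + g x) + (Aper x - A0) *ᵥ (p + g x)
    rw [sub_mulVec, add_sub_cancel]
  have hτ : Integrable τ :=
    ((integrable_mulVec_of_ae_bound hmeas hM hpg).sub (hpg.const_mulVec A0)).congr
      (ae_of_all _ fun x => (sub_mulVec (Aper x) A0 (p + g x)).symm)
  refine ⟨?_, fun x => -g x, isGreenConv_iff.mpr fun k j => ?_, ?_⟩
  · filter_upwards [heq] with x hx hxQ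
    simp [τ, hx hxQ]
  · obtain ⟨c, hc⟩ := hgrad k
    rcases eq_or_ne k 0 with rfl | hk
    · simp [vCoeff_neg, hc]
    have hτdiv : ∑ l, (k l : ℂ) * vCoeff τ k l = -(c * divGradSymbol A0 k) := by
      have := sum_mul_vCoeff_of_ae_eq hg hτ (ae_of_all _ hF) hk hc
      rw [hdiv k] at this
      linear_combination -this
    rw [vCoeff_neg, Pi.neg_apply, hc, hτdiv]
    field_simp [ofReal_ne_zero.mpr (divGradSymbol_pos hA0pos hk).ne']
  · filter_upwards [hunit] with x hx hxQ
    rw [mulVec_mulVec, nonsing_inv_mul _ (hx hxQ), one_mulVec]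
    ext j
    simp

theorem corrector_of_lippmannSchwinger
    (hA0pos : ∀ ξ : Fin d → ℝ, ξ ≠ 0 → 0 < ∑ i, ∑ j, ξ i * A0 i j * ξ j)
    (heq : ∀ᵐ x : Torus d, x ∉ Q0 → Aper x = A0)
    (hunit : ∀ᵐ x : Torus d, x ∈ Q0 → IsUnit (Aper x - A0).det) (p : Fin d → ℝ)
    {τ G : Torus d → Fin d → ℝ} (hτ : Integrable τ) (hG : Integrable G) (hzero : ZeroOff Q0 τ)
    (hconv : IsGreenConv A0 τ G) (hLS : ∀ᵐ x : Torus d, x ∈ Q0 → (Aper x - A0)⁻¹ *ᵥ τ x + G x = p) :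
    IsGradientField (fun x => -G x) ∧ IsWeakDivFree (fun x => Aper x *ᵥ fun j => p j - G x j) := by
  set c : (Fin d → ℤ) → ℂ := fun k =>
    -(((divGradSymbol A0 k : ℝ) : ℂ)⁻¹ * ∑ l, (k l : ℂ) * vCoeff τ k l)
  have hgrad : ∀ k j, vCoeff (fun x => -G x) k j = c k * k j := fun k j => by
    rw [vCoeff_neg, Pi.neg_apply, isGreenConv_iff.mp hconv k j]
    ring
  refine ⟨fun k => ⟨c k, hgrad k⟩, fun k => ?_⟩
  rcases eq_or_ne k 0 with rfl | hk
  · simp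
  have hF : ∀ᵐ x, Aper x *ᵥ (fun j => p j - G x j) = A0 *ᵥ (p + -G x) + τ x := by
    filter_upwards [heq, hzero, hLS, hunit] with x hA hτ0 hx hdet
    rw [← sub_eq_add_neg]
    by_cases hxQ : x ∈ Q0
    · exact mulVec_sub_eq_mulVec_add_of_inv_mulVec_add_eq (hdet hxQ) (hx hxQ)
    · rw [hA hxQ, hτ0 hxQ, add_zero]
      rfl
  rw [sum_mul_vCoeff_of_ae_eq hG.neg hτ hF hk (hgrad k)]
  simp only [c]
  field_simp [ofReal_ne_zero.mpr (divGradSymbol_pos hA0pos hk).ne']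
  ring

end Equivalence

theorem stmt_2_general {d : ℕ} (Aper : Torus d → Matrix (Fin d) (Fin d) ℝ)
    (A0 : Matrix (Fin d) (Fin d) ℝ) (Q0 : Set (Torus d))
    (hmeas : ∀ i j, Measurable fun x => Aper x i j)
    (hbound : ∃ M : ℝ, ∀ᵐ x : Torus d, ∀ i j, |Aper x i j| ≤ M)
    (hA0pos : ∀ ξ : Fin d → ℝ, ξ ≠ 0 → 0 < ∑ i, ∑ j, ξ i * A0 i j * ξ j)
    (heq : ∀ᵐ x : Torus d, x ∉ Q0 → Aper x = A0)
    (c0 : ℝ) (hc0 : 0 < c0)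
    (hcontrast : ∀ᵐ x : Torus d, x ∈ Q0 → ∀ ξ : Fin d → ℝ,
      c0 * ∑ i, ξ i ^ 2 ≤ |∑ i, ∑ j, ξ i * (Aper x i j - A0 i j) * ξ j|)
    (p : Fin d → ℝ) :
    -- (⇒) if `w_p` (with gradient `g`) solves the corrector problem, then
    -- `τ_p = (A_per - A₀)(p + ∇w_p)` solves the Lippmann–Schwinger equation
    (∀ g : Torus d → Fin d → ℝ, MemLp g 2 (volume : Measure (Torus d)) →
      IsGradientField g →
      IsWeakDivFree (fun x => (Aper x).mulVec fun j => p j + g x j) →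
      ZeroOff Q0 (fun x => (Aper x - A0).mulVec fun j => p j + g x j) ∧
        ∃ G : Torus d → Fin d → ℝ,
          IsGreenConv A0 (fun x => (Aper x - A0).mulVec fun j => p j + g x j) G ∧
            ∀ᵐ x : Torus d, x ∈ Q0 →
              (Aper x - A0)⁻¹.mulVec ((Aper x - A0).mulVec fun j => p j + g x j) + G x = p) ∧
    -- (⇐) if `τ_p` solves the Lippmann–Schwinger equation, then `w_p` defined (up to a
    -- constant) by `∇w_p = -Γ₀ ∗ τ_p` solves the corrector problem
    (∀ τ G : Torus d → Fin d → ℝ, MemLp τ 2 (volume : Measure (Torus d)) →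
      MemLp G 2 (volume : Measure (Torus d)) → ZeroOff Q0 τ → IsGreenConv A0 τ G →
      (∀ᵐ x : Torus d, x ∈ Q0 → (Aper x - A0)⁻¹.mulVec (τ x) + G x = p) →
      IsGradientField (fun x => -G x) ∧
        IsWeakDivFree (fun x => (Aper x).mulVec fun j => p j - G x j)) := by
  obtain ⟨M, hM⟩ := hbound
  have hunit : ∀ᵐ x : Torus d, x ∈ Q0 → IsUnit (Aper x - A0).det := by
    filter_upwards [hcontrast] with x hx hxQ
    exact isUnit_det_of_le_abs_quadForm hc0 (hx hxQ)
  exact ⟨fun g hg hgrad hdiv => lippmannSchwinger_of_corrector hmeas hM hA0pos heq hunit p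
      (hg.integrable one_le_two) hgrad hdiv,
    fun τ G hτ hG hzero hconv hLS => corrector_of_lippmannSchwinger hA0pos heq hunit p
      (hτ.integrable one_le_two) (hG.integrable one_le_two) hzero hconv hLS⟩

/-- Equivalence between the periodic corrector problem
`-div[A_per(p + ∇w_p)] = 0` and the Lippmann–Schwinger equation
`(A_per - A₀)⁻¹τ_p + Γ₀ ∗ τ_p = p` a.e. on `Q₀`, `τ_p = 0` on `Q \ Q₀`,
via `τ_p = (A_per - A₀)(p + ∇w_p)`. -/
theorem stmt_2 {d : ℕ} (Aper : Torus d → Matrix (Fin d) (Fin d) ℝ)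
    (A0 : Matrix (Fin d) (Fin d) ℝ) (Q0 : Set (Torus d)) (hQ0 : MeasurableSet Q0)
    (hmeas : ∀ i j, Measurable fun x => Aper x i j)
    (hsym : ∀ᵐ x : Torus d, (Aper x).IsSymm) (hA0sym : A0.IsSymm)
    (aco : ℝ) (haco : 0 < aco)
    (hcoer : ∀ᵐ x : Torus d, ∀ ξ : Fin d → ℝ,
      aco * ∑ i, ξ i ^ 2 ≤ ∑ i, ∑ j, ξ i * Aper x i j * ξ j)
    (hbound : ∃ M : ℝ, ∀ᵐ x : Torus d, ∀ i j, |Aper x i j| ≤ M)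
    (hA0pos : ∀ ξ : Fin d → ℝ, ξ ≠ 0 → 0 < ∑ i, ∑ j, ξ i * A0 i j * ξ j)
    (heq : ∀ᵐ x : Torus d, x ∉ Q0 → Aper x = A0)
    (c0 : ℝ) (hc0 : 0 < c0)
    (hcontrast : ∀ᵐ x : Torus d, x ∈ Q0 → ∀ ξ : Fin d → ℝ,
      c0 * ∑ i, ξ i ^ 2 ≤ |∑ i, ∑ j, ξ i * (Aper x i j - A0 i j) * ξ j|)
    (p : Fin d → ℝ) :
    -- (⇒) if `w_p` (with gradient `g`) solves the corrector problem, then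
    -- `τ_p = (A_per - A₀)(p + ∇w_p)` solves the Lippmann–Schwinger equation
    (∀ g : Torus d → Fin d → ℝ, MemLp g 2 (volume : Measure (Torus d)) →
      IsGradientField g →
      IsWeakDivFree (fun x => (Aper x).mulVec fun j => p j + g x j) →
      ZeroOff Q0 (fun x => (Aper x - A0).mulVec fun j => p j + g x j) ∧
        ∃ G : Torus d → Fin d → ℝ,
          IsGreenConv A0 (fun x => (Aper x - A0).mulVec fun j => p j + g x j) G ∧
            ∀ᵐ x : Torus d, x ∈ Q0 →
              (Aper x - A0)⁻¹.mulVec ((Aper x - A0).mulVec fun j => p j + g x j) + G x = p) ∧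
    -- (⇐) if `τ_p` solves the Lippmann–Schwinger equation, then `w_p` defined (up to a
    -- constant) by `∇w_p = -Γ₀ ∗ τ_p` solves the corrector problem
    (∀ τ G : Torus d → Fin d → ℝ, MemLp τ 2 (volume : Measure (Torus d)) →
      MemLp G 2 (volume : Measure (Torus d)) → ZeroOff Q0 τ → IsGreenConv A0 τ G →
      (∀ᵐ x : Torus d, x ∈ Q0 → (Aper x - A0)⁻¹.mulVec (τ x) + G x = p) →
      IsGradientField (fun x => -G x) ∧
        IsWeakDivFree (fun x => (Aper x).mulVec fun j => p j - G x j)) :=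
  stmt_2_general Aper A0 Q0 hmeas hbound hA0pos heq c0 hc0 hcontrast p
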